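/- arXiv:1210.2605 — 3 statements merged into one kernel-verified Lean document; each statement's English description precedes it below -/
import Mathlib

section
/- For a concave (submodular) continuous capacity ν on a measurable space X, the Choquet integral is sublinear: for all measurable f, g : X → [0,∞] and α, β ≥ 0, ∮(αf + βg) dν ≤ α∮f dν + β∮g dν. -/
/-!
Homogeneity is the substitution `t ↦ t / a` in the defining integral. For subadditivity,
submodularity applied to the level sets `{f > t}` and `A ∩ {f + c > t}` gives, after integrating
in `t` and cancelling `∫ ν (A ∩ {f > t}) dt`, the one-step bound `∮ (f + c 1_A) ≤ ∮ f + c ν A`.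
Dominating `g` by the staircase `∑ₖ δ 1_{g > kδ}` and adding its steps one at a time yields
`∮ (f + g) ≤ ∮ f + ∑ₖ δ ν (g > kδ)`, a Riemann sum of the antitone function `t ↦ ν (g > t)`
which is at most `∮ g + δ ν (g > 0)`; then let `δ → 0`.
-/

open MeasureTheory
open scoped ENNReal NNReal

/-- The Choquet integral of `f : X → [0,∞]` against a set function `ν`:
`∮ f dν = ∫₀^∞ ν({x | f(x) > t}) dt`. -/
noncomputable def choquet {X : Type*} [MeasurableSpace X]
    (ν : Set X → ℝ≥0∞) (f : X → ℝ≥0∞) : ℝ≥0∞ :=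
  ∫⁻ t in Set.Ioi (0 : ℝ), ν {x | ENNReal.ofReal t < f x}

/-- `ν` is an (ω-)capacity on the Borel sets of `X`: it vanishes on `∅`, takes finite
values, is monotone, and is continuous along increasing sequences of measurable sets. -/
def IsCapacity {X : Type*} [MeasurableSpace X] (ν : Set X → ℝ≥0∞) : Prop :=
  ν ∅ = 0 ∧
  (∀ s : Set X, MeasurableSet s → ν s ≠ ∞) ∧
  (∀ s t : Set X, MeasurableSet s → MeasurableSet t → s ⊆ t → ν s ≤ ν t) ∧
  (∀ U : ℕ → Set X, (∀ n, MeasurableSet (U n)) → Monotone U →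
    ν (⋃ n, U n) = ⨆ n, ν (U n))

open Set Filter Topology

def IsSubmodular {X : Type*} [MeasurableSpace X] (ν : Set X → ℝ≥0∞) : Prop :=
  ∀ s t : Set X, MeasurableSet s → MeasurableSet t → ν (s ∪ t) + ν (s ∩ t) ≤ ν s + ν t

lemma lintegral_Ioi_comp_sub (F : ℝ → ℝ≥0∞) (c : ℝ) :
    ∫⁻ t in Ioi c, F (t - c) = ∫⁻ t in Ioi 0, F t := by
  rw [← lintegral_indicator measurableSet_Ioi, ← lintegral_indicator measurableSet_Ioi,
    ← lintegral_sub_right_eq_self ((Ioi 0).indicator F) c]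
  congr 1 with t
  simp [indicator, sub_pos]

lemma lintegral_Ioi_comp_div (F : ℝ → ℝ≥0∞) {a : ℝ} (ha : 0 < a) :
    ∫⁻ t in Ioi 0, F (t / a) = ENNReal.ofReal a * ∫⁻ t in Ioi 0, F t := by
  have hmap : Measure.map (a⁻¹ * ·) volume = ENNReal.ofReal a • volume := by
    rw [Real.map_volume_mul_left (inv_ne_zero ha.ne'), inv_inv, abs_of_pos ha]
  rw [← lintegral_indicator measurableSet_Ioi, ← lintegral_indicator measurableSet_Ioi,
    ← smul_eq_mul, ← lintegral_smul_measure, ← hmap,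
    (measurableEmbedding_mulLeft₀ (inv_ne_zero ha.ne')).lintegral_map]
  congr 1 with t
  simp [indicator, div_eq_inv_mul, ha]

lemma Antitone.tsum_mul_le_lintegral_Ioi {F : ℝ → ℝ≥0∞} (hF : Antitone F) {δ : ℝ}
    (hδ : 0 ≤ δ) :
    ∑' k : ℕ, ENNReal.ofReal δ * F ((k + 1) * δ) ≤ ∫⁻ t in Ioi 0, F t := by
  have hmono : Monotone fun k : ℕ => (k : ℝ) * δ := fun k l hkl =>
    mul_le_mul_of_nonneg_right (by exact_mod_cast hkl) hδ
  calc ∑' k : ℕ, ENNReal.ofReal δ * F ((k + 1) * δ)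
      ≤ ∑' k : ℕ, ∫⁻ t in Ioc (k * δ) ((k + 1) * δ), F t := by
        refine ENNReal.tsum_le_tsum fun k => ?_
        calc ENNReal.ofReal δ * F ((k + 1) * δ)
            = ∫⁻ _ in Ioc (k * δ) ((k + 1) * δ), F ((k + 1) * δ) := by
              rw [setLIntegral_const, Real.volume_Ioc, mul_comm]; ring_nf
          _ ≤ ∫⁻ t in Ioc (k * δ) ((k + 1) * δ), F t :=
              setLIntegral_mono hF.measurable fun t ht => hF ht.2
    _ = ∫⁻ t in ⋃ k : ℕ, Ioc (k * δ) ((k + 1) * δ), F t := by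
        rw [lintegral_iUnion (fun _ => measurableSet_Ioc)]
        simpa using hmono.pairwise_disjoint_on_Ioc_succ
    _ ≤ ∫⁻ t in Ioi 0, F t :=
        lintegral_mono_set (iUnion_subset fun k t ht =>
          lt_of_le_of_lt (by positivity) ht.1)

lemma le_tsum_indicator_level {X : Type*} (g : X → ℝ≥0∞) {δ : ℝ} (hδ : 0 < δ) (x : X) :
    g x ≤ ∑' k : ℕ, {y | ENNReal.ofReal (k * δ) < g y}.indicator
      (fun _ => ENNReal.ofReal δ) x := by
  refine ENNReal.le_of_forall_nnreal_lt fun r hr => ?_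
  set N := ⌈(r : ℝ) / δ⌉₊
  have hlt : ∀ k ∈ Finset.range N, ENNReal.ofReal (k * δ) < g x := fun k hk => by
    have : (k : ℝ) * δ < r := (lt_div_iff₀ hδ).mp (Nat.lt_ceil.mp (Finset.mem_range.mp hk))
    exact ((ENNReal.ofReal_lt_coe_iff (by positivity)).mpr this).trans hr
  calc (r : ℝ≥0∞) ≤ ENNReal.ofReal (N * δ) := by
        rw [← ENNReal.ofReal_coe_nnreal]
        exact ENNReal.ofReal_le_ofReal ((div_le_iff₀ hδ).mp (Nat.le_ceil _))
    _ = ∑ k ∈ Finset.range N, {y | ENNReal.ofReal (k * δ) < g y}.indicator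
          (fun _ => ENNReal.ofReal δ) x := by
        rw [Finset.sum_congr rfl fun k hk => indicator_of_mem
          (show x ∈ {y | ENNReal.ofReal ((k : ℕ) * δ) < g y} from hlt k hk) _]
        simp [ENNReal.ofReal_mul]
    _ ≤ _ := ENNReal.sum_le_tsum _

section Choquet

variable {X : Type*} [MeasurableSpace X] {ν : Set X → ℝ≥0∞}

lemma IsCapacity.empty (hν : IsCapacity ν) : ν ∅ = 0 := hν.1

lemma IsCapacity.ne_top (hν : IsCapacity ν) {s : Set X} (hs : MeasurableSet s) : ν s ≠ ∞ :=
  hν.2.1 s hs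

lemma IsCapacity.mono (hν : IsCapacity ν) {s t : Set X} (hs : MeasurableSet s)
    (ht : MeasurableSet t) (hst : s ⊆ t) : ν s ≤ ν t :=
  hν.2.2.1 s t hs ht hst

lemma IsCapacity.iUnion_eq_iSup (hν : IsCapacity ν) {U : ℕ → Set X}
    (hU : ∀ n, MeasurableSet (U n)) (hmono : Monotone U) : ν (⋃ n, U n) = ⨆ n, ν (U n) :=
  hν.2.2.2 U hU hmono

lemma IsCapacity.restrict (hν : IsCapacity ν) {A : Set X} (hA : MeasurableSet A) :
    IsCapacity fun s => ν (A ∩ s) := by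
  refine ⟨by simpa using hν.empty, fun s hs => hν.ne_top (hA.inter hs),
    fun s t hs ht hst => hν.mono (hA.inter hs) (hA.inter ht) (inter_subset_inter_right A hst),
    fun U hU hmono => ?_⟩
  dsimp only
  rw [inter_iUnion]
  exact hν.iUnion_eq_iSup (fun n => hA.inter (hU n))
    fun m n hmn => inter_subset_inter_right A (hmono hmn)

lemma measurableSet_ofReal_lt {f : X → ℝ≥0∞} (hf : Measurable f) (t : ℝ) :
    MeasurableSet {x | ENNReal.ofReal t < f x} :=
  measurableSet_lt measurable_const hf

lemma IsCapacity.antitone_level (hν : IsCapacity ν) {f : X → ℝ≥0∞} (hf : Measurable f) :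
    Antitone fun t : ℝ => ν {x | ENNReal.ofReal t < f x} := fun s t hst =>
  hν.mono (measurableSet_ofReal_lt hf t) (measurableSet_ofReal_lt hf s)
    fun _ hx => (ENNReal.ofReal_le_ofReal hst).trans_lt hx

lemma choquet_mono (hν : IsCapacity ν) {f g : X → ℝ≥0∞} (hf : Measurable f)
    (hg : Measurable g) (hfg : f ≤ g) : choquet ν f ≤ choquet ν g :=
  lintegral_mono fun t => hν.mono (measurableSet_ofReal_lt hf t) (measurableSet_ofReal_lt hg t)
    fun x hx => hx.trans_le (hfg x)

lemma choquet_iSup (hν : IsCapacity ν) {f : ℕ → X → ℝ≥0∞} (hf : ∀ n, Measurable (f n))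
    (hmono : Monotone f) : choquet ν (fun x => ⨆ n, f n x) = ⨆ n, choquet ν (f n) := by
  have hlevel : ∀ t : ℝ, ν {x | ENNReal.ofReal t < ⨆ n, f n x}
      = ⨆ n, ν {x | ENNReal.ofReal t < f n x} := fun t => by
    simp only [lt_iSup_iff, ofPred_exists]
    exact hν.iUnion_eq_iSup (fun n => measurableSet_ofReal_lt (hf n) t)
      fun m n hmn x hx => hx.trans_le (hmono hmn x)
  simp only [choquet, hlevel]
  exact lintegral_iSup (fun n => (hν.antitone_level (hf n)).measurable)
    fun m n hmn t => hν.mono (measurableSet_ofReal_lt (hf m) t) (measurableSet_ofReal_lt (hf n) t)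
      fun x hx => hx.trans_le (hmono hmn x)

lemma choquet_add_const (μ : Set X → ℝ≥0∞) (f : X → ℝ≥0∞) (c : ℝ≥0) :
    choquet μ (fun x => f x + c) = c * μ univ + choquet μ f := by
  rcases eq_or_ne c 0 with rfl | hc
  · simp
  have hc : (0 : ℝ) < c := by positivity
  have hlow : EqOn (fun t : ℝ => μ {x | ENNReal.ofReal t < f x + c}) (fun _ => μ univ)
      (Ioo 0 c) := fun t ht => by
    have : ENNReal.ofReal t < c := by
      simpa using (ENNReal.ofReal_lt_ofReal_iff hc).mpr ht.2
    simp [this.trans_le le_add_self]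
  have hhigh : EqOn (fun t : ℝ => μ {x | ENNReal.ofReal t < f x + c})
      (fun t => μ {x | ENNReal.ofReal (t - c) < f x}) (Ioi c) := fun t ht => by
    have hsplit : ENNReal.ofReal t = ENNReal.ofReal (t - c) + c := by
      rw [← ENNReal.ofReal_coe_nnreal, ← ENNReal.ofReal_add (by linarith [mem_Ioi.mp ht])
        c.coe_nonneg, sub_add_cancel]
    simp only [hsplit, ENNReal.add_lt_add_iff_right ENNReal.coe_ne_top]
  simp only [choquet]
  conv_lhs => rw [← Ioo_union_Ici_eq_Ioi hc]
  rw [lintegral_union measurableSet_Ici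
      ((Iio_disjoint_Ici le_rfl).mono_left Ioo_subset_Iio_self),
    setLIntegral_congr_fun measurableSet_Ioo hlow, setLIntegral_const, Real.volume_Ioo,
    ← setLIntegral_congr Ioi_ae_eq_Ici, setLIntegral_congr_fun measurableSet_Ioi hhigh,
    lintegral_Ioi_comp_sub (fun t => μ {x | ENNReal.ofReal t < f x})]
  simp [mul_comm]

lemma choquet_add_indicator_le (hν : IsCapacity ν) (hsub : IsSubmodular ν) {f : X → ℝ≥0∞}
    (hf : Measurable f) {A : Set X} (hA : MeasurableSet A) (c : ℝ≥0) :
    choquet ν (fun x => f x + A.indicator (fun _ => (c : ℝ≥0∞)) x) ≤ choquet ν f + c * ν A := by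
  by_cases hfin : choquet ν f = ∞
  · simp [hfin]
  set νA : Set X → ℝ≥0∞ := fun s => ν (A ∩ s)
  have hνA : IsCapacity νA := hν.restrict hA
  have hfc : Measurable fun x => f x + c := hf.add_const _
  have hlevel : ∀ t : ℝ,
      ν {x | ENNReal.ofReal t < f x + A.indicator (fun _ => (c : ℝ≥0∞)) x}
        + νA {x | ENNReal.ofReal t < f x}
        ≤ ν {x | ENNReal.ofReal t < f x} + νA {x | ENNReal.ofReal t < f x + c} := fun t => by
    have hS := measurableSet_ofReal_lt hf t
    have hB := hA.inter (measurableSet_ofReal_lt hfc t)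
    calc _ ≤ ν ({x | ENNReal.ofReal t < f x} ∪ (A ∩ {x | ENNReal.ofReal t < f x + c}))
            + ν ({x | ENNReal.ofReal t < f x} ∩ (A ∩ {x | ENNReal.ofReal t < f x + c})) := by
          gcongr
          · refine hν.mono (measurableSet_ofReal_lt (hf.add (measurable_const.indicator hA)) t)
              (hS.union hB) fun x hx => ?_
            by_cases hxA : x ∈ A <;> simp_all
          · exact hν.mono (hA.inter hS) (hS.inter hB)
              fun x ⟨hxA, (hxf : ENNReal.ofReal t < f x)⟩ =>
                ⟨hxf, hxA, show ENNReal.ofReal t < f x + c from hxf.trans_le le_self_add⟩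
      _ ≤ _ := hsub _ _ hS hB
  have hint : choquet ν (fun x => f x + A.indicator (fun _ => (c : ℝ≥0∞)) x) + choquet νA f
      ≤ choquet ν f + (c * ν A + choquet νA f) := by
    have := choquet_add_const νA f c
    simp only [νA, inter_univ] at this
    rw [← this]
    simp only [choquet]
    rw [← lintegral_add_right _ (hνA.antitone_level hf).measurable,
      ← lintegral_add_right _ (hνA.antitone_level hfc).measurable]
    exact lintegral_mono hlevel
  have hνAf : choquet νA f ≠ ∞ := ne_top_of_le_ne_top hfin <|
    lintegral_mono fun t => hν.mono (hA.inter (measurableSet_ofReal_lt hf t))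
      (measurableSet_ofReal_lt hf t) inter_subset_right
  rw [← add_assoc] at hint
  exact ENNReal.le_of_add_le_add_right hνAf hint

lemma choquet_add_sum_indicator_le (hν : IsCapacity ν) (hsub : IsSubmodular ν)
    {f : X → ℝ≥0∞} (hf : Measurable f) {A : ℕ → Set X} (hA : ∀ k, MeasurableSet (A k))
    (c : ℕ → ℝ≥0) (n : ℕ) :
    choquet ν (fun x => f x + ∑ k ∈ Finset.range n, (A k).indicator (fun _ => (c k : ℝ≥0∞)) x)
      ≤ choquet ν f + ∑ k ∈ Finset.range n, c k * ν (A k) := by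
  induction n with
  | zero => simp
  | succ n ih =>
    have hmeas : Measurable fun x =>
        f x + ∑ k ∈ Finset.range n, (A k).indicator (fun _ => (c k : ℝ≥0∞)) x :=
      hf.add <| Finset.measurable_sum _ fun k _ => measurable_const.indicator (hA k)
    simp only [Finset.sum_range_succ, ← add_assoc]
    exact (choquet_add_indicator_le hν hsub hmeas (hA n) (c n)).trans (by gcongr)

lemma choquet_add_tsum_indicator_le (hν : IsCapacity ν) (hsub : IsSubmodular ν)
    {f : X → ℝ≥0∞} (hf : Measurable f) {A : ℕ → Set X} (hA : ∀ k, MeasurableSet (A k))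
    (c : ℕ → ℝ≥0) :
    choquet ν (fun x => f x + ∑' k, (A k).indicator (fun _ => (c k : ℝ≥0∞)) x)
      ≤ choquet ν f + ∑' k, c k * ν (A k) := by
  simp only [ENNReal.tsum_eq_iSup_nat, ENNReal.add_iSup]
  rw [choquet_iSup hν]
  · exact iSup_le fun n => le_iSup_of_le n (choquet_add_sum_indicator_le hν hsub hf hA c n)
  · exact fun n => hf.add <| Finset.measurable_sum _ fun k _ => measurable_const.indicator (hA k)
  · exact fun m n hmn x => add_le_add le_rfl
      (Finset.sum_le_sum_of_subset (Finset.range_subset_range.mpr hmn))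

lemma choquet_add_le_add_add_ofReal_mul (hν : IsCapacity ν) (hsub : IsSubmodular ν)
    {f g : X → ℝ≥0∞} (hf : Measurable f) (hg : Measurable g) {δ : ℝ} (hδ : 0 < δ) :
    choquet ν (fun x => f x + g x)
      ≤ choquet ν f + choquet ν g + ENNReal.ofReal δ * ν {x | 0 < g x} := by
  set A : ℕ → Set X := fun k => {x | ENNReal.ofReal (k * δ) < g x}
  have hA : ∀ k, MeasurableSet (A k) := fun k => measurableSet_ofReal_lt hg _
  have hstair : Measurable fun x => f x + ∑' k, (A k).indicator (fun _ => ENNReal.ofReal δ) x :=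
    hf.add <| Measurable.tsum fun k => measurable_const.indicator (hA k)
  have hriemann := (hν.antitone_level hg).tsum_mul_le_lintegral_Ioi hδ.le
  calc choquet ν (fun x => f x + g x)
      ≤ choquet ν (fun x => f x + ∑' k, (A k).indicator (fun _ => ENNReal.ofReal δ) x) :=
        choquet_mono hν (hf.add hg) hstair fun x =>
          add_le_add le_rfl (le_tsum_indicator_level g hδ x)
    _ ≤ choquet ν f + ∑' k, ENNReal.ofReal δ * ν (A k) :=
        choquet_add_tsum_indicator_le hν hsub hf hA fun _ => δ.toNNReal
    _ = choquet ν f + (ENNReal.ofReal δ * ν {x | 0 < g x}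
          + ∑' k : ℕ, ENNReal.ofReal δ * ν {x | ENNReal.ofReal ((k + 1) * δ) < g x}) := by
        rw [tsum_eq_zero_add' ENNReal.summable]
        simp only [A, Nat.cast_zero, zero_mul, ENNReal.ofReal_zero, Nat.cast_succ]
    _ ≤ choquet ν f + choquet ν g + ENNReal.ofReal δ * ν {x | 0 < g x} := by
        rw [add_comm (ENNReal.ofReal δ * _), ← add_assoc]
        gcongr
        exact hriemann

lemma choquet_add_le (hν : IsCapacity ν) (hsub : IsSubmodular ν) {f g : X → ℝ≥0∞}
    (hf : Measurable f) (hg : Measurable g) :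
    choquet ν (fun x => f x + g x) ≤ choquet ν f + choquet ν g := by
  have hpos : ν {x | 0 < g x} ≠ ∞ := hν.ne_top (measurableSet_lt measurable_const hg)
  have hlim : Tendsto
      (fun δ : ℝ => choquet ν f + choquet ν g + ENNReal.ofReal δ * ν {x | 0 < g x}) (𝓝[>] 0)
      (𝓝 (choquet ν f + choquet ν g)) := by
    have hδ : Tendsto ENNReal.ofReal (𝓝[>] 0) (𝓝 0) := by
      simpa using (ENNReal.continuous_ofReal.tendsto 0).mono_left nhdsWithin_le_nhds
    simpa using tendsto_const_nhds.add (ENNReal.Tendsto.mul_const hδ (Or.inr hpos))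
  exact ge_of_tendsto hlim <| eventually_nhdsWithin_of_forall fun δ hδ =>
    choquet_add_le_add_add_ofReal_mul hν hsub hf hg hδ

lemma choquet_const_mul (h_empty : ν ∅ = 0) (f : X → ℝ≥0∞) (a : ℝ≥0) :
    choquet ν (fun x => a * f x) = a * choquet ν f := by
  rcases eq_or_ne a 0 with rfl | ha
  · simp [choquet, h_empty]
  have ha' : (0 : ℝ) < a := by positivity
  have hlevel : ∀ t : ℝ, {x | ENNReal.ofReal t < a * f x} = {x | ENNReal.ofReal (t / a) < f x} :=
    fun t => by
      ext x
      rw [mem_ofPred_eq, mem_ofPred_eq, ENNReal.ofReal_div_of_pos ha', ENNReal.ofReal_coe_nnreal,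
        ENNReal.div_lt_iff (Or.inl (by exact_mod_cast ha)) (Or.inl ENNReal.coe_ne_top), mul_comm]
  simp only [choquet, hlevel]
  rw [lintegral_Ioi_comp_div (fun t => ν {x | ENNReal.ofReal t < f x}) ha',
    ENNReal.ofReal_coe_nnreal]

end Choquet

/-- For a concave (submodular) continuous capacity, the Choquet integral is sublinear:
`∮ (αf + βg) dν ≤ α ∮f dν + β ∮g dν` for all measurable `f, g : X → [0,∞]` and all
scalars `α, β ≥ 0`. -/
theorem choquet_sublinear_of_submodular {X : Type*} [MeasurableSpace X]
    (ν : Set X → ℝ≥0∞) (hν : IsCapacity ν)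
    (hsub : ∀ s t : Set X, MeasurableSet s → MeasurableSet t →
      ν (s ∪ t) + ν (s ∩ t) ≤ ν s + ν t)
    (f g : X → ℝ≥0∞) (hf : Measurable f) (hg : Measurable g) (α β : ℝ≥0) :
    choquet ν (fun x => α * f x + β * g x) ≤
      α * choquet ν f + β * choquet ν g := by
  calc choquet ν (fun x => α * f x + β * g x)
      ≤ choquet ν (fun x => α * f x) + choquet ν (fun x => β * g x) :=
        choquet_add_le hν hsub (hf.const_mul _) (hg.const_mul _)
    _ = α * choquet ν f + β * choquet ν g := by
        rw [choquet_const_mul hν.empty, choquet_const_mul hν.empty]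
end

section
/- The Choquet integral with respect to a monotone continuous capacity is ω-Scott-continuous in the integrand: if (fₙ) is an ascending sequence of measurable functions X → [0,∞] with pointwise supremum f, then ∮f dν = sup↑ₙ ∮fₙ dν. -/
open MeasureTheory
open scoped ENNReal NNReal

/-- The Choquet integral against a monotone continuous capacity is ω-Scott-continuous in
the integrand: if `(fₙ)` is an ascending sequence of measurable functions with pointwise
supremum `f`, then `∮ f dν = sup↑ₙ ∮ fₙ dν`. -/
theorem choquet_scott_continuous {X : Type*} [MeasurableSpace X]
    (ν : Set X → ℝ≥0∞) (hν : IsCapacity ν)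
    (f : ℕ → (X → ℝ≥0∞)) (hf : ∀ n, Measurable (f n)) (hmono : Monotone f) :
    choquet ν (fun x => ⨆ n, f n x) = ⨆ n, choquet ν (f n) := by
  obtain ⟨h0, hfin, hmonoν, hcont⟩ := hν
  set g : ℕ → ℝ → ℝ≥0∞ := fun n t => ν {x | ENNReal.ofReal t < f n x} with hg
  have hmeas_set : ∀ n t, MeasurableSet {x | ENNReal.ofReal t < f n x} := fun n t =>
    measurableSet_lt measurable_const (hf n)
  have hganti : ∀ n, Antitone (g n) := by
    intro n s t hst
    exact hmonoν _ _ (hmeas_set n t) (hmeas_set n s)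
      (fun x hx => lt_of_le_of_lt (ENNReal.ofReal_le_ofReal hst) hx)
  have hgmeas : ∀ n, Measurable (g n) := fun n => (hganti n).measurable
  have hgmono : Monotone g := by
    intro m n hmn t
    exact hmonoν _ _ (hmeas_set m t) (hmeas_set n t)
      (fun x hx => lt_of_lt_of_le hx (hmono hmn x))
  have key : ∀ t : ℝ, ν {x | ENNReal.ofReal t < ⨆ n, f n x} = ⨆ n, g n t := by
    intro t
    have hU : {x | ENNReal.ofReal t < ⨆ n, f n x} = ⋃ n, {x | ENNReal.ofReal t < f n x} := by
      ext x
      simp [lt_iSup_iff]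
    rw [hU]
    exact hcont _ (fun n => hmeas_set n t) (fun m n hmn x hx => lt_of_lt_of_le hx (hmono hmn x))
  unfold choquet
  calc (∫⁻ t in Set.Ioi (0 : ℝ), ν {x | ENNReal.ofReal t < ⨆ n, f n x})
      = ∫⁻ t in Set.Ioi (0 : ℝ), ⨆ n, g n t := by
        exact lintegral_congr fun t => key t
    _ = ⨆ n, ∫⁻ t in Set.Ioi (0 : ℝ), g n t :=
        lintegral_iSup (fun n => (hgmeas n)) (fun m n hmn t => hgmono hmn t)
    _ = ⨆ n, choquet ν (f n) := rfl
end

section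
/- If ν is a concave (submodular) monotone continuous capacity on Σ, then the functional κ ↦ ∮κ dν on measurable functions κ : Σ → [0,∞] is an upper ω-continuous prevision: it is positively homogeneous, monotone, subadditive (∮(f+g)dν ≤ ∮f dν + ∮g dν), and preserves suprema of ascending sequences; dually, if ν is convex (supermodular), the functional is a lower ω-continuous prevision (superadditive instead of subadditive). -/
open MeasureTheory
open scoped ENNReal NNReal

section ChoquetAux

open Set

variable {St : Type*} [MeasurableSpace St]

lemma measNuLev (ν : Set St → ℝ≥0∞)
    (hm : ∀ s t : Set St, MeasurableSet s → MeasurableSet t → s ⊆ t → ν s ≤ ν t)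
    {A : Set St} (hA : MeasurableSet A) {f : St → ℝ≥0∞} (hf : Measurable f) :
    Measurable fun t : ℝ => ν (A ∩ {x | ENNReal.ofReal t < f x}) := by
  refine Antitone.measurable fun a b hab => ?_
  exact hm _ _ (hA.inter (measurableSet_lt measurable_const hf))
    (hA.inter (measurableSet_lt measurable_const hf))
    (inter_subset_inter_right _ fun x hx => lt_of_le_of_lt (ENNReal.ofReal_le_ofReal hab) hx)

lemma measNuLev' (ν : Set St → ℝ≥0∞)
    (hm : ∀ s t : Set St, MeasurableSet s → MeasurableSet t → s ⊆ t → ν s ≤ ν t)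
    {f : St → ℝ≥0∞} (hf : Measurable f) :
    Measurable fun t : ℝ => ν {x | ENNReal.ofReal t < f x} := by
  simpa only [Set.univ_inter] using measNuLev ν hm MeasurableSet.univ hf

lemma choquet_shift (ν : Set St → ℝ≥0∞) (f : St → ℝ≥0∞) {c : ℝ≥0∞} (hc : c ≠ ∞) :
    ∫⁻ t in Set.Ioi (0:ℝ), ν {x | ENNReal.ofReal t < f x + c}
      = c * ν Set.univ + ∫⁻ t in Set.Ioi (0:ℝ), ν {x | ENNReal.ofReal t < f x} := by
  set cR := c.toReal with hcR
  have hcR0 : 0 ≤ cR := ENNReal.toReal_nonneg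
  have hcor : c = ENNReal.ofReal cR := (ENNReal.ofReal_toReal hc).symm
  have hae : (Set.Ioi (0:ℝ) : Set ℝ) =ᵐ[volume] ((Set.Ioo 0 cR ∪ Set.Ici cR : Set ℝ)) := by
    rcases eq_or_lt_of_le hcR0 with h | h
    · rw [← h]
      simp only [Set.Ioo_self, Set.empty_union]
      exact Ioi_ae_eq_Ici
    · rw [show Set.Ioo 0 cR ∪ Set.Ici cR = Set.Ioi 0 from ?_]
      · exact Filter.EventuallyEq.rfl
      · ext t
        simp only [Set.mem_union, Set.mem_Ioo, Set.mem_Ici, Set.mem_Ioi]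
        constructor
        · rintro (⟨h1, _⟩ | h1)
          · exact h1
          · exact lt_of_lt_of_le h h1
        · intro ht
          rcases lt_or_ge t cR with h2 | h2
          · exact Or.inl ⟨ht, h2⟩
          · exact Or.inr h2
  rw [setLIntegral_congr hae, lintegral_union measurableSet_Ici
    ((Set.Iio_disjoint_Ici le_rfl).mono_left Set.Ioo_subset_Iio_self)]
  have h1 : ∫⁻ t in Set.Ioo 0 cR, ν {x | ENNReal.ofReal t < f x + c} = c * ν Set.univ := by
    rw [setLIntegral_congr_fun measurableSet_Ioo (fun t ht => ?_)]
    · rw [setLIntegral_const, Real.volume_Ioo, sub_zero, ← hcor, mul_comm]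
    · have : {x : St | ENNReal.ofReal t < f x + c} = Set.univ := by
        refine Set.eq_univ_of_forall fun x => ?_
        have h2 : ENNReal.ofReal t < c := by
          rw [hcor]
          exact (ENNReal.ofReal_lt_ofReal_iff (lt_of_le_of_lt ht.1.le ht.2 |>.trans_le le_rfl)).mpr ht.2
        exact lt_of_lt_of_le h2 le_add_self
      rw [this]
  have h2 : ∫⁻ t in Set.Ici cR, ν {x | ENNReal.ofReal t < f x + c}
      = ∫⁻ t in Set.Ioi (0:ℝ), ν {x | ENNReal.ofReal t < f x} := by
    have hkey : ∀ t ∈ Set.Ici cR,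
        ν {x | ENNReal.ofReal t < f x + c} = ν {x | ENNReal.ofReal (t - cR) < f x} := by
      intro t ht
      congr 1
      ext x
      simp only [Set.mem_setOf_eq]
      constructor
      · intro h
        by_contra hcon
        push_neg at hcon
        have : f x + c ≤ ENNReal.ofReal (t - cR) + ENNReal.ofReal cR :=
          add_le_add hcon (hcor ▸ le_rfl)
        rw [← ENNReal.ofReal_add (sub_nonneg.mpr ht) hcR0, sub_add_cancel] at this
        exact absurd (lt_of_lt_of_le h this) (lt_irrefl _)
      · intro h
        have : ENNReal.ofReal t = ENNReal.ofReal (t - cR) + c := by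
          rw [hcor, ← ENNReal.ofReal_add (sub_nonneg.mpr ht) hcR0, sub_add_cancel]
        rw [this]
        exact ENNReal.add_lt_add_right hc h
    rw [setLIntegral_congr_fun measurableSet_Ici hkey]
    have := (measurePreserving_add_right volume cR).setLIntegral_comp_preimage_emb
      (measurableEmbedding_addRight cR)
      (fun s => ν {x | ENNReal.ofReal (s - cR) < f x}) (Set.Ici cR)
    rw [Set.preimage_add_const_Ici, sub_self] at this
    rw [← this]
    simp only [add_sub_cancel_right]
    exact (setLIntegral_congr (Ioi_ae_eq_Ici (a := (0:ℝ)))).symm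
  rw [h1, h2]

lemma choquet_comonotone (ν : Set St → ℝ≥0∞) (h0 : ν ∅ = 0)
    (hm : ∀ s t : Set St, MeasurableSet s → MeasurableSet t → s ⊆ t → ν s ≤ ν t)
    {f : St → ℝ≥0∞} (hf : Measurable f) {A : Set St} (hA : MeasurableSet A)
    {m c : ℝ≥0∞} (hmt : m ≠ ∞) (hct : c ≠ ∞)
    (hfm : ∀ x, f x ≤ m) (hAm : ∀ x ∈ A, f x = m) :
    choquet ν (fun x => f x + A.indicator (fun _ => c) x)
      = choquet ν f + ν A * c := by
  set mR := m.toReal with hmR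
  set cR := c.toReal with hcR
  have hmR0 : 0 ≤ mR := ENNReal.toReal_nonneg
  have hcR0 : 0 ≤ cR := ENNReal.toReal_nonneg
  have hmor : m = ENNReal.ofReal mR := (ENNReal.ofReal_toReal hmt).symm
  have hcor : c = ENNReal.ofReal cR := (ENNReal.ofReal_toReal hct).symm
  have key : ∀ t ∈ Set.Ioi (0:ℝ),
      ν {x | ENNReal.ofReal t < f x + A.indicator (fun _ => c) x}
        = ν {x | ENNReal.ofReal t < f x}
          + (Set.Ico mR (mR + cR)).indicator (fun _ => ν A) t := by
    intro t ht
    rcases lt_or_ge (ENNReal.ofReal t) m with h | h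
    · have hset : {x | ENNReal.ofReal t < f x + A.indicator (fun _ => c) x}
          = {x | ENNReal.ofReal t < f x} := by
        ext x
        simp only [Set.mem_setOf_eq]
        constructor
        · intro hx
          by_cases hxA : x ∈ A
          · rw [hAm x hxA]; exact h
          · simpa [Set.indicator_of_notMem hxA] using hx
        · intro hx
          exact lt_of_lt_of_le hx le_self_add
      have hind : (Set.Ico mR (mR + cR)).indicator (fun _ => ν A) t = 0 := by
        refine Set.indicator_of_notMem (fun htm => ?_) _
        have : m ≤ ENNReal.ofReal t := by
          rw [hmor]
          exact ENNReal.ofReal_le_ofReal htm.1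
        exact absurd h (not_lt.mpr this)
      rw [hset, hind, add_zero]
    · have hset0 : {x : St | ENNReal.ofReal t < f x} = ∅ := by
        refine Set.eq_empty_iff_forall_notMem.mpr fun x hx => ?_
        exact absurd (lt_of_le_of_lt h hx) (not_lt.mpr (hfm x))
      rcases lt_or_ge (ENNReal.ofReal t) (m + c) with h2 | h2
      · have hset : {x | ENNReal.ofReal t < f x + A.indicator (fun _ => c) x} = A := by
          ext x
          simp only [Set.mem_setOf_eq]
          constructor
          · intro hx
            by_contra hxA
            rw [Set.indicator_of_notMem hxA, add_zero] at hx
            exact absurd (lt_of_le_of_lt h hx) (not_lt.mpr (hfm x))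
          · intro hxA
            rw [Set.indicator_of_mem hxA, hAm x hxA]
            exact h2
        have hind : (Set.Ico mR (mR + cR)).indicator (fun _ => ν A) t = ν A := by
          refine Set.indicator_of_mem (⟨?_, ?_⟩ : t ∈ Set.Ico mR (mR + cR)) (fun _ => ν A)
          · rw [hmor] at h
            exact (ENNReal.ofReal_le_ofReal_iff (le_of_lt ht)).mp h
          · have : ENNReal.ofReal t < ENNReal.ofReal (mR + cR) := by
              rw [ENNReal.ofReal_add hmR0 hcR0, ← hmor, ← hcor]
              exact h2
            exact (ENNReal.ofReal_lt_ofReal_iff_of_nonneg (le_of_lt ht)).mp this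
        rw [hset, hset0, hind, h0, zero_add]
      · have hset : {x | ENNReal.ofReal t < f x + A.indicator (fun _ => c) x} = ∅ := by
          refine Set.eq_empty_iff_forall_notMem.mpr fun x hx => ?_
          simp only [Set.mem_setOf_eq] at hx
          by_cases hxA : x ∈ A
          · rw [Set.indicator_of_mem hxA, hAm x hxA] at hx
            exact absurd hx (not_lt.mpr h2)
          · rw [Set.indicator_of_notMem hxA, add_zero] at hx
            exact absurd (lt_of_le_of_lt h hx) (not_lt.mpr (hfm x))
        have hind : (Set.Ico mR (mR + cR)).indicator (fun _ => ν A) t = 0 := by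
          refine Set.indicator_of_notMem (fun htm => ?_) _
          have : ENNReal.ofReal t < m + c := by
            rw [hmor, hcor, ← ENNReal.ofReal_add hmR0 hcR0]
            exact ENNReal.ofReal_lt_ofReal_iff_of_nonneg (le_of_lt ht) |>.mpr htm.2
          exact absurd this (not_lt.mpr h2)
        rw [hset, hset0, hind, h0, add_zero]
  unfold choquet
  rw [setLIntegral_congr_fun measurableSet_Ioi key]
  rw [lintegral_add_left (measNuLev' ν hm hf)]
  congr 1
  rw [lintegral_indicator measurableSet_Ico]
  rw [Measure.restrict_restrict measurableSet_Ico, setLIntegral_const]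
  have hvol : volume (Set.Ico mR (mR + cR) ∩ Set.Ioi 0) = ENNReal.ofReal cR := by
    refine le_antisymm ?_ ?_
    · calc volume (Set.Ico mR (mR + cR) ∩ Set.Ioi 0) ≤ volume (Set.Ico mR (mR + cR)) :=
            measure_mono Set.inter_subset_left
        _ = ENNReal.ofReal cR := by rw [Real.volume_Ico, add_sub_cancel_left]
    · calc ENNReal.ofReal cR = volume (Set.Ioo mR (mR + cR)) := by
            rw [Real.volume_Ioo, add_sub_cancel_left]
        _ ≤ volume (Set.Ico mR (mR + cR) ∩ Set.Ioi 0) := by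
            refine measure_mono fun t ht => ⟨⟨le_of_lt ht.1, ht.2⟩, lt_of_le_of_lt hmR0 ht.1⟩
  rw [hvol, ← hcor]

lemma lev_union_inter {f : St → ℝ≥0∞} {A : Set St} {c : ℝ≥0∞} (t : ℝ) :
    ({x | ENNReal.ofReal t < f x} ∪ (A ∩ {x | ENNReal.ofReal t < f x + c})
        = {x | ENNReal.ofReal t < f x + A.indicator (fun _ => c) x}) ∧
      ({x | ENNReal.ofReal t < f x} ∩ (A ∩ {x | ENNReal.ofReal t < f x + c})
        = A ∩ {x | ENNReal.ofReal t < f x}) := by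
  constructor
  · ext x
    simp only [Set.mem_union, Set.mem_inter_iff, Set.mem_setOf_eq]
    by_cases hxA : x ∈ A
    · rw [Set.indicator_of_mem hxA]
      constructor
      · rintro (h | ⟨_, h⟩)
        · exact lt_of_lt_of_le h le_self_add
        · exact h
      · intro h
        exact Or.inr ⟨hxA, h⟩
    · rw [Set.indicator_of_notMem hxA, add_zero]
      constructor
      · rintro (h | ⟨hA', _⟩)
        · exact h
        · exact absurd hA' hxA
      · exact Or.inl
  · ext x
    simp only [Set.mem_inter_iff, Set.mem_setOf_eq]
    constructor
    · rintro ⟨h1, h2, _⟩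
      exact ⟨h2, h1⟩
    · rintro ⟨h1, h2⟩
      exact ⟨h2, h1, lt_of_lt_of_le h2 le_self_add⟩

lemma choquet_indicator_le (ν : Set St → ℝ≥0∞)
    (hm : ∀ s t : Set St, MeasurableSet s → MeasurableSet t → s ⊆ t → ν s ≤ ν t)
    (hsub : ∀ s t : Set St, MeasurableSet s → MeasurableSet t →
      ν (s ∪ t) + ν (s ∩ t) ≤ ν s + ν t)
    {f : St → ℝ≥0∞} (hf : Measurable f) {A : Set St} (hA : MeasurableSet A)
    {c : ℝ≥0∞} (hc : c ≠ ∞) :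
    choquet ν (fun x => f x + A.indicator (fun _ => c) x) ≤ choquet ν f + ν A * c := by
  have hmeasf : ∀ t : ℝ, MeasurableSet {x : St | ENNReal.ofReal t < f x} :=
    fun t => measurableSet_lt measurable_const hf
  have hmeasfc : ∀ t : ℝ, MeasurableSet {x : St | ENNReal.ofReal t < f x + c} :=
    fun t => measurableSet_lt measurable_const (hf.add measurable_const)
  have key : ∀ t : ℝ,
      ν {x | ENNReal.ofReal t < f x + A.indicator (fun _ => c) x}
          + ν (A ∩ {x | ENNReal.ofReal t < f x})
        ≤ ν {x | ENNReal.ofReal t < f x} + ν (A ∩ {x | ENNReal.ofReal t < f x + c}) := by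
    intro t
    have h := hsub {x | ENNReal.ofReal t < f x} (A ∩ {x | ENNReal.ofReal t < f x + c})
      (hmeasf t) (hA.inter (hmeasfc t))
    rwa [(lev_union_inter t).1, (lev_union_inter t).2] at h
  have hint : choquet ν (fun x => f x + A.indicator (fun _ => c) x)
        + ∫⁻ t in Set.Ioi (0:ℝ), ν (A ∩ {x | ENNReal.ofReal t < f x})
      ≤ choquet ν f
        + ∫⁻ t in Set.Ioi (0:ℝ), ν (A ∩ {x | ENNReal.ofReal t < f x + c}) := by
    unfold choquet
    rw [← lintegral_add_right _ (measNuLev ν hm hA hf),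
      ← lintegral_add_right _ (measNuLev ν hm hA (f := fun x => f x + c) (hf.add measurable_const))]
    exact lintegral_mono fun t => key t
  have hshift : ∫⁻ t in Set.Ioi (0:ℝ), ν (A ∩ {x | ENNReal.ofReal t < f x + c})
      = c * ν A + ∫⁻ t in Set.Ioi (0:ℝ), ν (A ∩ {x | ENNReal.ofReal t < f x}) := by
    have := choquet_shift (fun s => ν (A ∩ s)) f hc
    simpa only [Set.inter_univ] using this
  set I : ℝ≥0∞ := ∫⁻ t in Set.Ioi (0:ℝ), ν (A ∩ {x | ENNReal.ofReal t < f x}) with hI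
  by_cases hItop : I = ∞
  · have hle : I ≤ choquet ν f := by
      unfold choquet
      exact lintegral_mono fun t =>
        hm _ _ (hA.inter (hmeasf t)) (hmeasf t) Set.inter_subset_right
    have : choquet ν f = ∞ := top_le_iff.mp (hItop ▸ hle)
    rw [this, top_add]
    exact le_top
  · rw [hshift] at hint
    have : choquet ν (fun x => f x + A.indicator (fun _ => c) x) + I
        ≤ (choquet ν f + ν A * c) + I := by
      calc choquet ν (fun x => f x + A.indicator (fun _ => c) x) + I
          ≤ choquet ν f + (c * ν A + I) := hint
        _ = (choquet ν f + ν A * c) + I := by rw [mul_comm, ← add_assoc]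
    exact (ENNReal.add_le_add_iff_right hItop).mp this

lemma choquet_indicator_ge (ν : Set St → ℝ≥0∞)
    (hm : ∀ s t : Set St, MeasurableSet s → MeasurableSet t → s ⊆ t → ν s ≤ ν t)
    (hsup : ∀ s t : Set St, MeasurableSet s → MeasurableSet t →
      ν s + ν t ≤ ν (s ∪ t) + ν (s ∩ t))
    {f : St → ℝ≥0∞} (hf : Measurable f) {A : Set St} (hA : MeasurableSet A)
    {c : ℝ≥0∞} (hc : c ≠ ∞) :
    choquet ν f + ν A * c ≤ choquet ν (fun x => f x + A.indicator (fun _ => c) x) := by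
  have hmeasf : ∀ t : ℝ, MeasurableSet {x : St | ENNReal.ofReal t < f x} :=
    fun t => measurableSet_lt measurable_const hf
  have hmeasfc : ∀ t : ℝ, MeasurableSet {x : St | ENNReal.ofReal t < f x + c} :=
    fun t => measurableSet_lt measurable_const (hf.add measurable_const)
  have key : ∀ t : ℝ,
      ν {x | ENNReal.ofReal t < f x} + ν (A ∩ {x | ENNReal.ofReal t < f x + c})
        ≤ ν {x | ENNReal.ofReal t < f x + A.indicator (fun _ => c) x}
          + ν (A ∩ {x | ENNReal.ofReal t < f x}) := by
    intro t
    have h := hsup {x | ENNReal.ofReal t < f x} (A ∩ {x | ENNReal.ofReal t < f x + c})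
      (hmeasf t) (hA.inter (hmeasfc t))
    rwa [(lev_union_inter t).1, (lev_union_inter t).2] at h
  have hint : choquet ν f
        + ∫⁻ t in Set.Ioi (0:ℝ), ν (A ∩ {x | ENNReal.ofReal t < f x + c})
      ≤ choquet ν (fun x => f x + A.indicator (fun _ => c) x)
        + ∫⁻ t in Set.Ioi (0:ℝ), ν (A ∩ {x | ENNReal.ofReal t < f x}) := by
    unfold choquet
    rw [← lintegral_add_right _ (measNuLev ν hm hA hf),
      ← lintegral_add_right _ (measNuLev ν hm hA (f := fun x => f x + c) (hf.add measurable_const))]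
    exact lintegral_mono fun t => key t
  have hshift : ∫⁻ t in Set.Ioi (0:ℝ), ν (A ∩ {x | ENNReal.ofReal t < f x + c})
      = c * ν A + ∫⁻ t in Set.Ioi (0:ℝ), ν (A ∩ {x | ENNReal.ofReal t < f x}) := by
    have := choquet_shift (fun s => ν (A ∩ s)) f hc
    simpa only [Set.inter_univ] using this
  set I : ℝ≥0∞ := ∫⁻ t in Set.Ioi (0:ℝ), ν (A ∩ {x | ENNReal.ofReal t < f x}) with hI
  by_cases hItop : I = ∞
  · have hle : I ≤ choquet ν (fun x => f x + A.indicator (fun _ => c) x) := by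
      unfold choquet
      refine lintegral_mono fun t => hm _ _ (hA.inter (hmeasf t)) ?_ ?_
      · exact measurableSet_lt measurable_const (hf.add (measurable_const.indicator hA))
      · intro x hx
        have h2 : ENNReal.ofReal t < f x := hx.2
        exact lt_of_lt_of_le h2 le_self_add
    have htop : choquet ν (fun x => f x + A.indicator (fun _ => c) x) = ∞ :=
      top_le_iff.mp (hItop ▸ hle)
    rw [htop]
    exact le_top
  · rw [hshift] at hint
    have : (choquet ν f + ν A * c) + I
        ≤ choquet ν (fun x => f x + A.indicator (fun _ => c) x) + I := by
      calc (choquet ν f + ν A * c) + I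
          = choquet ν f + (c * ν A + I) := by rw [mul_comm, ← add_assoc]
        _ ≤ _ := hint
    exact (ENNReal.add_le_add_iff_right hItop).mp this

lemma choquet_zero (ν : Set St → ℝ≥0∞) (h0 : ν ∅ = 0) :
    choquet ν (fun _ => (0:ℝ≥0∞)) = 0 := by
  unfold choquet
  simp [h0]

lemma choquet_const_decomp (ν : Set St → ℝ≥0∞) (h0 : ν ∅ = 0)
    (hm : ∀ s t : Set St, MeasurableSet s → MeasurableSet t → s ⊆ t → ν s ≤ ν t)
    {v : ℝ≥0∞} (hv : v ≠ ∞) :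
    choquet ν (fun _ => v) = ν Set.univ * v := by
  have h := choquet_comonotone ν h0 hm (f := fun _ => (0:ℝ≥0∞)) measurable_const
    (A := Set.univ) MeasurableSet.univ (m := 0) (c := v) (by simp) hv
    (fun _ => le_rfl) (fun _ _ => rfl)
  simpa [choquet_zero ν h0] using h

lemma choquet_homog (ν : Set St → ℝ≥0∞) (h0 : ν ∅ = 0)
    (α : ℝ≥0) (f : St → ℝ≥0∞) :
    choquet ν (fun x => α * f x) = α * choquet ν f := by
  rcases eq_or_ne α 0 with rfl | hα
  · simp [choquet, h0]
  · have haR0 : (0:ℝ) < (α:ℝ) := by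
      exact_mod_cast hα.bot_lt
    set aR : ℝ := (α:ℝ) with haRdef
    have haRne : aR ≠ 0 := ne_of_gt haR0
    have hmap : Measure.map (fun t : ℝ => aR * t) (ENNReal.ofReal aR • volume) = volume := by
      rw [Measure.map_smul, Real.map_volume_mul_left haRne, smul_smul,
        ← ENNReal.ofReal_mul (le_of_lt haR0), abs_inv, abs_of_pos haR0,
        mul_inv_cancel₀ haRne]
      simp
    have mp : MeasurePreserving (fun t : ℝ => aR * t) (ENNReal.ofReal aR • volume) volume :=
      ⟨measurable_const_mul aR, hmap⟩
    have hemb : MeasurableEmbedding (fun t : ℝ => aR * t) := measurableEmbedding_mulLeft₀ haRne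
    have hpre := mp.setLIntegral_comp_preimage_emb hemb
      (fun s => ν {x | ENNReal.ofReal s < ↑α * f x}) (Set.Ioi 0)
    rw [Set.preimage_const_mul_Ioi₀ _ haR0, zero_div] at hpre
    unfold choquet
    rw [← hpre, Measure.restrict_smul, lintegral_smul_measure]
    congr 1
    · exact ENNReal.ofReal_coe_nnreal
    · refine setLIntegral_congr_fun measurableSet_Ioi (fun t ht => ?_)
      congr 1
      ext x
      simp only [Set.mem_setOf_eq]
      rw [ENNReal.ofReal_mul (le_of_lt haR0), ENNReal.ofReal_coe_nnreal]
      exact ENNReal.mul_lt_mul_iff_right (by exact_mod_cast hα) ENNReal.coe_ne_top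

lemma choquet_omega (ν : Set St → ℝ≥0∞)
    (hm : ∀ s t : Set St, MeasurableSet s → MeasurableSet t → s ⊆ t → ν s ≤ ν t)
    (hcont : ∀ U : ℕ → Set St, (∀ n, MeasurableSet (U n)) → Monotone U →
      ν (⋃ n, U n) = ⨆ n, ν (U n))
    (c : ℕ → St → ℝ≥0∞) (hc : ∀ n, Measurable (c n)) (hmono : Monotone c) :
    choquet ν (fun x => ⨆ n, c n x) = ⨆ n, choquet ν (c n) := by
  unfold choquet
  have h1 : ∀ t : ℝ, {x | ENNReal.ofReal t < ⨆ n, c n x}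
      = ⋃ n, {x | ENNReal.ofReal t < c n x} := by
    intro t
    ext x
    simp [lt_iSup_iff]
  have h2 : ∀ t : ℝ, ν {x | ENNReal.ofReal t < ⨆ n, c n x}
      = ⨆ n, ν {x | ENNReal.ofReal t < c n x} := by
    intro t
    rw [h1 t]
    refine hcont _ (fun n => measurableSet_lt measurable_const (hc n)) ?_
    intro a b hab x hx
    exact lt_of_lt_of_le hx (hmono hab x)
  simp_rw [h2]
  refine lintegral_iSup (fun n => measNuLev' ν hm (hc n)) ?_
  intro a b hab t
  exact hm _ _ (measurableSet_lt measurable_const (hc a))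
    (measurableSet_lt measurable_const (hc b))
    (fun x hx => lt_of_lt_of_le hx (hmono hab x))

lemma choquet_finrange_subadd (ν : Set St → ℝ≥0∞) (h0 : ν ∅ = 0)
    (hm : ∀ s t : Set St, MeasurableSet s → MeasurableSet t → s ⊆ t → ν s ≤ ν t)
    (hsub : ∀ s t : Set St, MeasurableSet s → MeasurableSet t →
      ν (s ∪ t) + ν (s ∩ t) ≤ ν s + ν t) :
    ∀ (n : ℕ) (s : Finset ℝ≥0∞), s.card ≤ n → ∞ ∉ s →
      ∀ g : St → ℝ≥0∞, Measurable g → (∀ x, g x ∈ s) →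
      ∀ f : St → ℝ≥0∞, Measurable f →
      choquet ν (fun x => f x + g x) ≤ choquet ν f + choquet ν g := by
  intro n
  induction n with
  | zero =>
    intro s hcard _ g hg hgs f hf
    rw [Finset.card_eq_zero.mp (Nat.le_zero.mp hcard)] at hgs
    haveI : IsEmpty St := ⟨fun x => by simpa using hgs x⟩
    have hz : ∀ h : St → ℝ≥0∞, choquet ν h = 0 := by
      intro h
      unfold choquet
      have : ∀ t : ℝ, {x : St | ENNReal.ofReal t < h x} = ∅ := fun t => Set.eq_empty_of_isEmpty _
      simp [this, h0]
    rw [hz, hz, hz]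
    simp
  | succ n ih =>
    intro s hcard hstop g hg hgs f hf
    rcases s.eq_empty_or_nonempty with rfl | hs
    · haveI : IsEmpty St := ⟨fun x => by simpa using hgs x⟩
      have hz : ∀ h : St → ℝ≥0∞, choquet ν h = 0 := by
        intro h
        unfold choquet
        have : ∀ t : ℝ, {x : St | ENNReal.ofReal t < h x} = ∅ := fun t => Set.eq_empty_of_isEmpty _
        simp [this, h0]
      rw [hz, hz, hz]
      simp
    · set m := s.max' hs with hmdef
      have hms : m ∈ s := s.max'_mem hs
      have hmtop : m ≠ ∞ := fun h => hstop (h ▸ hms)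
      rcases (s.erase m).eq_empty_or_nonempty with herase | h2
      · have hsingle : s = {m} :=
          ((Finset.erase_eq_empty_iff s m).mp herase).resolve_left hs.ne_empty
        have hgm : ∀ x, g x = m := fun x => by
          have := hgs x
          rw [hsingle] at this
          exact Finset.mem_singleton.mp this
        have hgconst : g = fun _ => m := funext hgm
        have hdecomp : (fun x => f x + g x)
            = fun x => f x + (Set.univ : Set St).indicator (fun _ => m) x := by
          funext x
          rw [hgm x, Set.indicator_of_mem (Set.mem_univ x)]
        rw [hdecomp, hgconst, choquet_const_decomp ν h0 hm hmtop]
        exact choquet_indicator_le ν hm hsub hf MeasurableSet.univ hmtop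
      · set m₂ := (s.erase m).max' h2 with hm2def
        have hm2mem : m₂ ∈ s.erase m := (s.erase m).max'_mem h2
        have hm2s : m₂ ∈ s := Finset.mem_of_mem_erase hm2mem
        have hm2ne : m₂ ≠ m := Finset.ne_of_mem_erase hm2mem
        have hm2lt : m₂ < m := lt_of_le_of_ne (s.le_max' _ hm2s) hm2ne
        have hm2top : m₂ ≠ ∞ := fun h => hstop (h ▸ hm2s)
        set c := m - m₂ with hcdef
        have hctop : c ≠ ∞ := by
          simp only [hcdef]
          exact ENNReal.sub_ne_top hmtop
        set A := {x | m₂ < g x} with hAdef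
        have hA : MeasurableSet A := measurableSet_lt measurable_const hg
        set g' := fun x => min (g x) m₂ with hg'def
        have hg' : Measurable g' := hg.min measurable_const
        have hgA : ∀ x ∈ A, g x = m := by
          intro x hx
          by_contra hne
          have : g x ∈ s.erase m := Finset.mem_erase.mpr ⟨hne, hgs x⟩
          exact absurd ((s.erase m).le_max' _ this) (not_le.mpr hx)
        have hg'le : ∀ x, g' x ≤ m₂ := fun x => min_le_right _ _
        have hg'A : ∀ x ∈ A, g' x = m₂ := by
          intro x hx
          simp only [hg'def]
          exact min_eq_right (le_of_lt (hgA x hx ▸ hm2lt))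
        have hdecomp : ∀ x, g x = g' x + A.indicator (fun _ => c) x := by
          intro x
          by_cases hx : x ∈ A
          · rw [Set.indicator_of_mem hx, hg'A x hx, hgA x hx, hcdef]
            exact (add_tsub_cancel_of_le (le_of_lt hm2lt)).symm
          · rw [Set.indicator_of_notMem hx, add_zero, hg'def]
            have : g x ≤ m₂ := not_lt.mp hx
            exact (min_eq_left this).symm
        have hg's : ∀ x, g' x ∈ s.erase m := by
          intro x
          by_cases hx : g x ≤ m₂
          · have h1 : g' x = g x := min_eq_left hx
            rw [h1]
            exact Finset.mem_erase.mpr ⟨fun h => absurd (h ▸ hx) (not_le.mpr hm2lt), hgs x⟩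
          · have h1 : g' x = m₂ := min_eq_right (le_of_lt (not_le.mp hx))
            rw [h1]
            exact hm2mem
        have hcard' : (s.erase m).card ≤ n := by
          have := Finset.card_erase_of_mem hms
          omega
        have hstop' : ∞ ∉ s.erase m := fun h => hstop (Finset.mem_of_mem_erase h)
        have hgvalue : choquet ν g = choquet ν g' + ν A * c := by
          have := choquet_comonotone ν h0 hm hg' hA hm2top hctop hg'le hg'A
          rw [← this]
          congr 1
          exact funext hdecomp
        have hchain : choquet ν (fun x => f x + g x)
            = choquet ν (fun x => (f x + g' x) + A.indicator (fun _ => c) x) := by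
          congr 1
          funext x
          rw [hdecomp x, add_assoc]
        calc choquet ν (fun x => f x + g x)
            = choquet ν (fun x => (f x + g' x) + A.indicator (fun _ => c) x) := hchain
          _ ≤ choquet ν (fun x => f x + g' x) + ν A * c :=
              choquet_indicator_le ν hm hsub (hf.add hg') hA hctop
          _ ≤ (choquet ν f + choquet ν g') + ν A * c := by
              exact add_le_add_left (ih (s.erase m) hcard' hstop' g' hg' hg's f hf) _
          _ = choquet ν f + choquet ν g := by rw [add_assoc, ← hgvalue]

lemma choquet_finrange_superadd (ν : Set St → ℝ≥0∞) (h0 : ν ∅ = 0)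
    (hm : ∀ s t : Set St, MeasurableSet s → MeasurableSet t → s ⊆ t → ν s ≤ ν t)
    (hsup : ∀ s t : Set St, MeasurableSet s → MeasurableSet t →
      ν s + ν t ≤ ν (s ∪ t) + ν (s ∩ t)) :
    ∀ (n : ℕ) (s : Finset ℝ≥0∞), s.card ≤ n → ∞ ∉ s →
      ∀ g : St → ℝ≥0∞, Measurable g → (∀ x, g x ∈ s) →
      ∀ f : St → ℝ≥0∞, Measurable f →
      choquet ν f + choquet ν g ≤ choquet ν (fun x => f x + g x) := by
  intro n
  induction n with
  | zero =>
    intro s hcard _ g hg hgs f hf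
    rw [Finset.card_eq_zero.mp (Nat.le_zero.mp hcard)] at hgs
    haveI : IsEmpty St := ⟨fun x => by simpa using hgs x⟩
    have hz : ∀ h : St → ℝ≥0∞, choquet ν h = 0 := by
      intro h
      unfold choquet
      have : ∀ t : ℝ, {x : St | ENNReal.ofReal t < h x} = ∅ := fun t => Set.eq_empty_of_isEmpty _
      simp [this, h0]
    rw [hz, hz, hz]
    simp
  | succ n ih =>
    intro s hcard hstop g hg hgs f hf
    rcases s.eq_empty_or_nonempty with rfl | hs
    · haveI : IsEmpty St := ⟨fun x => by simpa using hgs x⟩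
      have hz : ∀ h : St → ℝ≥0∞, choquet ν h = 0 := by
        intro h
        unfold choquet
        have : ∀ t : ℝ, {x : St | ENNReal.ofReal t < h x} = ∅ := fun t => Set.eq_empty_of_isEmpty _
        simp [this, h0]
      rw [hz, hz, hz]
      simp
    · set m := s.max' hs with hmdef
      have hms : m ∈ s := s.max'_mem hs
      have hmtop : m ≠ ∞ := fun h => hstop (h ▸ hms)
      rcases (s.erase m).eq_empty_or_nonempty with herase | h2
      · have hsingle : s = {m} :=
          ((Finset.erase_eq_empty_iff s m).mp herase).resolve_left hs.ne_empty
        have hgm : ∀ x, g x = m := fun x => by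
          have := hgs x
          rw [hsingle] at this
          exact Finset.mem_singleton.mp this
        have hgconst : g = fun _ => m := funext hgm
        have hdecomp : (fun x => f x + g x)
            = fun x => f x + (Set.univ : Set St).indicator (fun _ => m) x := by
          funext x
          rw [hgm x, Set.indicator_of_mem (Set.mem_univ x)]
        rw [hdecomp, hgconst, choquet_const_decomp ν h0 hm hmtop]
        exact choquet_indicator_ge ν hm hsup hf MeasurableSet.univ hmtop
      · set m₂ := (s.erase m).max' h2 with hm2def
        have hm2mem : m₂ ∈ s.erase m := (s.erase m).max'_mem h2
        have hm2s : m₂ ∈ s := Finset.mem_of_mem_erase hm2mem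
        have hm2ne : m₂ ≠ m := Finset.ne_of_mem_erase hm2mem
        have hm2lt : m₂ < m := lt_of_le_of_ne (s.le_max' _ hm2s) hm2ne
        have hm2top : m₂ ≠ ∞ := fun h => hstop (h ▸ hm2s)
        set c := m - m₂ with hcdef
        have hctop : c ≠ ∞ := by
          simp only [hcdef]
          exact ENNReal.sub_ne_top hmtop
        set A := {x | m₂ < g x} with hAdef
        have hA : MeasurableSet A := measurableSet_lt measurable_const hg
        set g' := fun x => min (g x) m₂ with hg'def
        have hg' : Measurable g' := hg.min measurable_const
        have hgA : ∀ x ∈ A, g x = m := by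
          intro x hx
          by_contra hne
          have : g x ∈ s.erase m := Finset.mem_erase.mpr ⟨hne, hgs x⟩
          exact absurd ((s.erase m).le_max' _ this) (not_le.mpr hx)
        have hg'le : ∀ x, g' x ≤ m₂ := fun x => min_le_right _ _
        have hg'A : ∀ x ∈ A, g' x = m₂ := by
          intro x hx
          simp only [hg'def]
          exact min_eq_right (le_of_lt (hgA x hx ▸ hm2lt))
        have hdecomp : ∀ x, g x = g' x + A.indicator (fun _ => c) x := by
          intro x
          by_cases hx : x ∈ A
          · rw [Set.indicator_of_mem hx, hg'A x hx, hgA x hx, hcdef]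
            exact (add_tsub_cancel_of_le (le_of_lt hm2lt)).symm
          · rw [Set.indicator_of_notMem hx, add_zero, hg'def]
            have : g x ≤ m₂ := not_lt.mp hx
            exact (min_eq_left this).symm
        have hg's : ∀ x, g' x ∈ s.erase m := by
          intro x
          by_cases hx : g x ≤ m₂
          · have h1 : g' x = g x := min_eq_left hx
            rw [h1]
            exact Finset.mem_erase.mpr ⟨fun h => absurd (h ▸ hx) (not_le.mpr hm2lt), hgs x⟩
          · have h1 : g' x = m₂ := min_eq_right (le_of_lt (not_le.mp hx))
            rw [h1]
            exact hm2mem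
        have hcard' : (s.erase m).card ≤ n := by
          have := Finset.card_erase_of_mem hms
          omega
        have hstop' : ∞ ∉ s.erase m := fun h => hstop (Finset.mem_of_mem_erase h)
        have hgvalue : choquet ν g = choquet ν g' + ν A * c := by
          have := choquet_comonotone ν h0 hm hg' hA hm2top hctop hg'le hg'A
          rw [← this]
          congr 1
          exact funext hdecomp
        have hchain : choquet ν (fun x => f x + g x)
            = choquet ν (fun x => (f x + g' x) + A.indicator (fun _ => c) x) := by
          congr 1
          funext x
          rw [hdecomp x, add_assoc]
        calc choquet ν f + choquet ν g
            = (choquet ν f + choquet ν g') + ν A * c := by rw [add_assoc, ← hgvalue]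
          _ ≤ choquet ν (fun x => f x + g' x) + ν A * c := by
              exact add_le_add_left (ih (s.erase m) hcard' hstop' g' hg' hg's f hf) _
          _ ≤ choquet ν (fun x => (f x + g' x) + A.indicator (fun _ => c) x) :=
              choquet_indicator_ge ν hm hsup (hf.add hg') hA hctop
          _ = choquet ν (fun x => f x + g x) := hchain.symm

end ChoquetAux

/-- If `ν` is a concave (submodular) monotone continuous capacity on `Σ`, then the
functional `κ ↦ ∮ κ dν` on measurable `κ : Σ → [0,∞]` is an *upper* ω-continuous
prevision: positively homogeneous, monotone, subadditive, and preserving suprema of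
ascending sequences; dually, if `ν` is convex (supermodular), the functional is a *lower*
ω-continuous prevision (superadditive instead of subadditive). -/
theorem choquet_prevision {St : Type*} [MeasurableSpace St]
    (ν : Set St → ℝ≥0∞) (hν : IsCapacity ν) :
    -- positive homogeneity, monotonicity and ω-continuity hold for any capacity:
    (∀ (α : ℝ≥0) (f : St → ℝ≥0∞), Measurable f →
      choquet ν (fun x => α * f x) = α * choquet ν f) ∧
    (∀ f g : St → ℝ≥0∞, Measurable f → Measurable g → f ≤ g →
      choquet ν f ≤ choquet ν g) ∧
    (∀ c : ℕ → (St → ℝ≥0∞), (∀ n, Measurable (c n)) → Monotone c →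
      choquet ν (fun x => ⨆ n, c n x) = ⨆ n, choquet ν (c n)) ∧
    -- concave (submodular) ⟹ subadditive (upper prevision):
    ((∀ s t : Set St, MeasurableSet s → MeasurableSet t →
        ν (s ∪ t) + ν (s ∩ t) ≤ ν s + ν t) →
      ∀ f g : St → ℝ≥0∞, Measurable f → Measurable g →
        choquet ν (fun x => f x + g x) ≤ choquet ν f + choquet ν g) ∧
    -- convex (supermodular) ⟹ superadditive (lower prevision):
    ((∀ s t : Set St, MeasurableSet s → MeasurableSet t →
        ν s + ν t ≤ ν (s ∪ t) + ν (s ∩ t)) →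
      ∀ f g : St → ℝ≥0∞, Measurable f → Measurable g →
        choquet ν f + choquet ν g ≤ choquet ν (fun x => f x + g x)) := by
  obtain ⟨h0, hfin, hm, hcont⟩ := hν
  refine ⟨fun α f _ => choquet_homog ν h0 α f, ?_, fun c hc hmono => choquet_omega ν hm hcont c hc hmono, ?_, ?_⟩
  · -- monotonicity
    intro f g hf hg hle
    unfold choquet
    refine lintegral_mono fun t => hm _ _ (measurableSet_lt measurable_const hf)
      (measurableSet_lt measurable_const hg) fun x hx => lt_of_lt_of_le hx (hle x)
  · -- subadditivity
    intro hsub f g hf hg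
    set gn : ℕ → St → ℝ≥0∞ := fun n => (SimpleFunc.eapprox g n : St → ℝ≥0∞) with hgndef
    have hgnm : ∀ n, Measurable (gn n) := fun n => (SimpleFunc.eapprox g n).measurable
    have hgnmono : Monotone gn := fun a b hab x => SimpleFunc.monotone_eapprox g hab x
    have hkey : ∀ n, choquet ν (fun x => f x + gn n x) ≤ choquet ν f + choquet ν (gn n) := by
      intro n
      refine choquet_finrange_subadd ν h0 hm hsub (SimpleFunc.eapprox g n).range.card
        (SimpleFunc.eapprox g n).range le_rfl ?_ (gn n) (hgnm n)
        (fun x => SimpleFunc.mem_range_self _ x) f hf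
      intro hmem
      rw [SimpleFunc.mem_range] at hmem
      obtain ⟨x, hx⟩ := hmem
      exact absurd hx (ne_of_lt (SimpleFunc.eapprox_lt_top g n x))
    have hmono' : Monotone (fun n => fun x => f x + gn n x) :=
      fun a b hab x => add_le_add_right (hgnmono hab x) _
    have h1 : choquet ν (fun x => ⨆ n, (f x + gn n x))
        = ⨆ n, choquet ν (fun x => f x + gn n x) :=
      choquet_omega ν hm hcont _ (fun n => hf.add (hgnm n)) hmono'
    have h2 : choquet ν g = ⨆ n, choquet ν (gn n) := by
      rw [← choquet_omega ν hm hcont gn hgnm hgnmono]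
      congr 1
      funext x
      exact (SimpleFunc.iSup_eapprox_apply hg x).symm
    have h3 : (fun x => f x + g x) = fun x => ⨆ n, (f x + gn n x) := by
      funext x
      rw [← ENNReal.add_iSup]
      congr 1
      exact (SimpleFunc.iSup_eapprox_apply hg x).symm
    rw [h3, h1, h2]
    exact iSup_le fun n => (hkey n).trans
      (add_le_add_right (le_iSup (fun n => choquet ν (gn n)) n) _)
  · -- superadditivity
    intro hsup f g hf hg
    set gn : ℕ → St → ℝ≥0∞ := fun n => (SimpleFunc.eapprox g n : St → ℝ≥0∞) with hgndef
    have hgnm : ∀ n, Measurable (gn n) := fun n => (SimpleFunc.eapprox g n).measurable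
    have hgnmono : Monotone gn := fun a b hab x => SimpleFunc.monotone_eapprox g hab x
    have hkey : ∀ n, choquet ν f + choquet ν (gn n) ≤ choquet ν (fun x => f x + gn n x) := by
      intro n
      refine choquet_finrange_superadd ν h0 hm hsup (SimpleFunc.eapprox g n).range.card
        (SimpleFunc.eapprox g n).range le_rfl ?_ (gn n) (hgnm n)
        (fun x => SimpleFunc.mem_range_self _ x) f hf
      intro hmem
      rw [SimpleFunc.mem_range] at hmem
      obtain ⟨x, hx⟩ := hmem
      exact absurd hx (ne_of_lt (SimpleFunc.eapprox_lt_top g n x))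
    have hmono' : Monotone (fun n => fun x => f x + gn n x) :=
      fun a b hab x => add_le_add_right (hgnmono hab x) _
    have h1 : choquet ν (fun x => ⨆ n, (f x + gn n x))
        = ⨆ n, choquet ν (fun x => f x + gn n x) :=
      choquet_omega ν hm hcont _ (fun n => hf.add (hgnm n)) hmono'
    have h2 : choquet ν g = ⨆ n, choquet ν (gn n) := by
      rw [← choquet_omega ν hm hcont gn hgnm hgnmono]
      congr 1
      funext x
      exact (SimpleFunc.iSup_eapprox_apply hg x).symm
    have h3 : (fun x => f x + g x) = fun x => ⨆ n, (f x + gn n x) := by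
      funext x
      rw [← ENNReal.add_iSup]
      congr 1
      exact (SimpleFunc.iSup_eapprox_apply hg x).symm
    rw [h3, h1, h2, ENNReal.add_iSup]
    exact iSup_le fun n => (hkey n).trans (le_iSup (fun n => choquet ν (fun x => f x + gn n x)) n)
end
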